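/- arXiv:2412.18570 — 2 statements merged into one kernel-verified Lean document; each statement's English description precedes it below -/
import Mathlib

section
/- Let V be the ℂ-vector space with basis {e_k : k ∈ ℤ}, let π₊ and π₋ denote the projections of V onto the spans of {e_k : k ≥ 0} and {e_k : k < 0} respectively, and for an integer j let ρ_j(L_m) ∈ End(V) be given by ρ_j(L_m)(e_k) = −(k + j(m+1)) e_{k+m}. For endomorphisms F, G of V for which the relevant sums are finitely supported, define the Japanese cocycle η(F,G) := Σ_{k<0} [ (coefficient of e_k in (π₋ ∘ F ∘ π₊ ∘ G)(e_k)) − (coefficient of e_k in (π₋ ∘ G ∘ π₊ ∘ F)(e_k)) ]. Then for all integers j, m, n, these sums are finitely supported and η(ρ_j(L_m), ρ_j(L_n)) = (6j² − 6j + 1)·(m³ − m)/6 if m + n = 0, and η(ρ_j(L_m), ρ_j(L_n)) = 0 if m + n ≠ 0. -/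
/-- The intermediate-series operator `ρ_j(L_m)` on the `ℂ`-vector space with basis
`{e_k : k ∈ ℤ}` (modeled as `ℤ →₀ ℂ`, `e_k = Finsupp.single k 1`):
`ρ_j(L_m)(e_k) = −(k + j(m+1))·e_{k+m}`. -/
noncomputable def rho (j m : ℤ) : (ℤ →₀ ℂ) →ₗ[ℂ] (ℤ →₀ ℂ) :=
  Finsupp.lsum ℂ fun k => (-((k : ℂ) + (j : ℂ) * ((m : ℂ) + 1))) • Finsupp.lsingle (k + m)

/-- The projection `π₊` of `ℤ →₀ ℂ` onto the span of `{e_k : k ≥ 0}`. -/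
noncomputable def piPlus : (ℤ →₀ ℂ) →ₗ[ℂ] (ℤ →₀ ℂ) :=
  Finsupp.lsum ℂ fun k => if 0 ≤ k then Finsupp.lsingle k else 0

/-- The projection `π₋` of `ℤ →₀ ℂ` onto the span of `{e_k : k < 0}`. -/
noncomputable def piMinus : (ℤ →₀ ℂ) →ₗ[ℂ] (ℤ →₀ ℂ) :=
  Finsupp.lsum ℂ fun k => if k < 0 then Finsupp.lsingle k else 0

/-- The `k`-th diagonal entry (for `k < 0`) of `F^{−+}G^{+−} − G^{−+}F^{+−}`:
the coefficient of `e_k` in `(π₋ ∘ F ∘ π₊ ∘ G)(e_k) − (π₋ ∘ G ∘ π₊ ∘ F)(e_k)`. -/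
noncomputable def etaSummand (F G : (ℤ →₀ ℂ) →ₗ[ℂ] (ℤ →₀ ℂ)) (k : ℤ) : ℂ :=
  if k < 0 then
    ((piMinus ∘ₗ F ∘ₗ piPlus ∘ₗ G) (Finsupp.single k 1)) k -
      ((piMinus ∘ₗ G ∘ₗ piPlus ∘ₗ F) (Finsupp.single k 1)) k
  else 0

/-- The Japanese cocycle `η(F,G) = tr(F^{−+}G^{+−} − G^{−+}F^{+−})`, as a sum over `k < 0`
of diagonal matrix entries. -/
noncomputable def eta (F G : (ℤ →₀ ℂ) →ₗ[ℂ] (ℤ →₀ ℂ)) : ℂ :=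
  ∑ᶠ k : ℤ, etaSummand F G k

lemma rho_single (j m k : ℤ) (c : ℂ) :
    rho j m (Finsupp.single k c) = Finsupp.single (k + m) ((-((k : ℂ) + j * (m + 1))) * c) := by
  rw [rho, Finsupp.lsum_single]
  rw [LinearMap.smul_apply, Finsupp.lsingle_apply, Finsupp.smul_single, smul_eq_mul, mul_comm]

lemma piPlus_single (k : ℤ) (c : ℂ) :
    piPlus (Finsupp.single k c) = if 0 ≤ k then Finsupp.single k c else 0 := by
  rw [piPlus, Finsupp.lsum_single]; split <;> simp

lemma piMinus_single (k : ℤ) (c : ℂ) :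
    piMinus (Finsupp.single k c) = if k < 0 then Finsupp.single k c else 0 := by
  rw [piMinus, Finsupp.lsum_single]; split <;> simp

lemma comp_entry (j m n k : ℤ) :
    ((piMinus ∘ₗ rho j m ∘ₗ piPlus ∘ₗ rho j n) (Finsupp.single k 1)) k =
    if m + n = 0 ∧ k < 0 ∧ -n ≤ k then
      ((k:ℂ) + j * ((n:ℂ) + 1)) * (((k:ℂ) + n) + j * ((m:ℂ) + 1)) else 0 := by
  rw [LinearMap.comp_apply, LinearMap.comp_apply, LinearMap.comp_apply, rho_single,
    piPlus_single]
  by_cases h1 : 0 ≤ k + n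
  · rw [if_pos h1, rho_single, piMinus_single]
    by_cases h2 : k + n + m < 0
    · rw [if_pos h2, Finsupp.single_apply]
      by_cases h3 : k + n + m = k
      · rw [if_pos h3, if_pos ⟨by omega, by omega, by omega⟩]
        push_cast; ring
      · rw [if_neg h3, if_neg (by omega)]
    · rw [if_neg h2, if_neg (by omega), Finsupp.coe_zero, Pi.zero_apply]
  · rw [if_neg h1, map_zero, map_zero, if_neg (by omega), Finsupp.coe_zero, Pi.zero_apply]

lemma etaSummand_eq (j m n k : ℤ) :
    etaSummand (rho j m) (rho j n) k =
    (if m + n = 0 ∧ k < 0 ∧ -n ≤ k then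
      ((k:ℂ) + j * ((n:ℂ) + 1)) * (((k:ℂ) + n) + j * ((m:ℂ) + 1)) else 0) -
    (if m + n = 0 ∧ k < 0 ∧ -m ≤ k then
      ((k:ℂ) + j * ((m:ℂ) + 1)) * (((k:ℂ) + m) + j * ((n:ℂ) + 1)) else 0) := by
  rw [etaSummand, comp_entry, comp_entry, add_comm n m]
  by_cases hk : k < 0
  · rw [if_pos hk]
  · rw [if_neg hk, if_neg (by tauto), if_neg (by tauto), sub_zero]

lemma etaSummand_antisymm (F G : (ℤ →₀ ℂ) →ₗ[ℂ] (ℤ →₀ ℂ)) (k : ℤ) :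
    etaSummand F G k = -etaSummand G F k := by
  rw [etaSummand, etaSummand]
  split <;> simp [neg_sub]

lemma support_subset (j m n : ℤ) :
    Function.support (etaSummand (rho j m) (rho j n)) ⊆
      ↑(Finset.Icc (-|m| - |n|) (-1 : ℤ)) := by
  intro k hk
  simp only [Function.mem_support] at hk
  rw [etaSummand_eq] at hk
  simp only [Finset.coe_Icc, Set.mem_Icc]
  by_contra h
  have hm1 := neg_abs_le m; have hm2 := le_abs_self m
  have hn1 := neg_abs_le n; have hn2 := le_abs_self n
  have h1 : ¬(m + n = 0 ∧ k < 0 ∧ -n ≤ k) := by omega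
  have h2 : ¬(m + n = 0 ∧ k < 0 ∧ -m ≤ k) := by omega
  rw [if_neg h1, if_neg h2, sub_zero] at hk
  exact hk rfl

lemma sum1 (M : ℕ) : ∑ t ∈ Finset.range M, (t:ℂ) = M * (M - 1) / 2 := by
  induction M with
  | zero => simp
  | succ M ih => rw [Finset.sum_range_succ, ih]; push_cast; ring

lemma sum2 (M : ℕ) : ∑ t ∈ Finset.range M, (t:ℂ)^2 = M * (M - 1) * (2*M - 1) / 6 := by
  induction M with
  | zero => simp
  | succ M ih => rw [Finset.sum_range_succ, ih]; push_cast; ring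

lemma quad_sum (M : ℕ) (c1 c0 : ℂ) :
    ∑ t ∈ Finset.range M, (-((t:ℂ)^2 + c1 * t + c0))
      = -((M:ℂ)*(M-1)*(2*M-1)/6 + c1 * ((M:ℂ)*(M-1)/2) + M * c0) := by
  induction M with
  | zero => simp
  | succ M ih => rw [Finset.sum_range_succ, ih]; push_cast; ring

lemma eta_antisymm (F G : (ℤ →₀ ℂ) →ₗ[ℂ] (ℤ →₀ ℂ)) : eta F G = -eta G F := by
  rw [eta, eta, ← finsum_neg_distrib]
  exact finsum_congr fun k => etaSummand_antisymm F G k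

lemma eta_nonneg (j m : ℤ) (hm : 0 ≤ m) :
    eta (rho j m) (rho j (-m)) =
      ((6 * j ^ 2 - 6 * j + 1 : ℤ) : ℂ) * ((m ^ 3 - m : ℤ) : ℂ) / 6 := by
  have hmM : (m:ℂ) = ((m.toNat : ℕ):ℂ) := by
    exact_mod_cast (Int.toNat_of_nonneg hm).symm
  have hs : Function.support (etaSummand (rho j m) (rho j (-m))) ⊆
      ↑((Finset.range m.toNat).map ⟨fun t : ℕ => (t:ℤ) - m, fun a b h => by have h' : (a:ℤ) - m = (b:ℤ) - m := h; omega⟩) := by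
    intro k hk
    simp only [Function.mem_support] at hk
    rw [etaSummand_eq] at hk
    simp only [Finset.coe_map, Set.mem_image, Finset.mem_coe, Finset.mem_range,
      Function.Embedding.coeFn_mk]
    by_contra h
    push_neg at h
    have h1 : ¬(m + -m = 0 ∧ k < 0 ∧ -(-m) ≤ k) := by
      rintro ⟨_, h2, h3⟩; omega
    have h2 : ¬(m + -m = 0 ∧ k < 0 ∧ -m ≤ k) := by
      rintro ⟨_, h2, h3⟩
      exact absurd (h (k + m).toNat (by omega)) (by show ¬ (((k + m).toNat : ℤ) - m ≠ k); omega)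
    rw [if_neg h1, if_neg h2, sub_zero] at hk
    exact hk rfl
  calc eta (rho j m) (rho j (-m))
      = ∑ k ∈ (Finset.range m.toNat).map ⟨fun t : ℕ => (t:ℤ) - m, fun a b h => by have h' : (a:ℤ) - m = (b:ℤ) - m := h; omega⟩,
          etaSummand (rho j m) (rho j (-m)) k := finsum_eq_sum_of_support_subset _ hs
    _ = ∑ t ∈ Finset.range m.toNat, etaSummand (rho j m) (rho j (-m)) ((t:ℤ) - m) :=
        Finset.sum_map _ _ _
    _ = ∑ t ∈ Finset.range m.toNat,
          (-((t:ℂ)^2 + (2*(j:ℂ) - m) * t + (-(((m:ℂ) - j*(m+1)) * ((j:ℂ)*(1-m)))))) := by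
        refine Finset.sum_congr rfl fun t ht => ?_
        have htm : (t:ℤ) < m := by
          simp only [Finset.mem_range] at ht; omega
        rw [etaSummand_eq, if_neg (by rintro ⟨_, _, h3⟩; omega),
          if_pos ⟨by omega, by omega, by omega⟩, zero_sub]
        push_cast
        ring
    _ = ((6 * j ^ 2 - 6 * j + 1 : ℤ) : ℂ) * ((m ^ 3 - m : ℤ) : ℂ) / 6 := by
        rw [quad_sum]
        push_cast
        rw [hmM]
        ring

/-- For all integers `j, m, n`, the sums defining the Japanese cocycle on the operators
`ρ_j(L_m)`, `ρ_j(L_n)` are finitely supported, and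
`η(ρ_j(L_m), ρ_j(L_n)) = (6j² − 6j + 1)·(m³ − m)/6` if `m + n = 0`, and `= 0` otherwise. -/
theorem eta_rho_eval (j m n : ℤ) :
    (Function.support (etaSummand (rho j m) (rho j n))).Finite ∧
    eta (rho j m) (rho j n) =
      if m + n = 0 then ((6 * j ^ 2 - 6 * j + 1 : ℤ) : ℂ) * ((m ^ 3 - m : ℤ) : ℂ) / 6
      else 0 := by
  refine ⟨Set.Finite.subset (Finset.finite_toSet _) (support_subset j m n), ?_⟩
  by_cases hmn : m + n = 0
  · rw [if_pos hmn]
    have hn : n = -m := by omega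
    subst hn
    rcases le_or_gt 0 m with hm | hm
    · exact eta_nonneg j m hm
    · rw [eta_antisymm]
      have := eta_nonneg j (-m) (by omega)
      rw [neg_neg] at this
      rw [this]
      push_cast
      ring
  · rw [if_neg hmn, eta]
    have h0 : ∀ k : ℤ, etaSummand (rho j m) (rho j n) k = 0 := fun k => by
      rw [etaSummand_eq, if_neg (by tauto), if_neg (by tauto), sub_zero]
    rw [finsum_congr h0, finsum_zero]
end

section
/- Let H be a vector space over ℂ and H⁺ ⊆ H a fixed subspace. Call a subspace K ⊆ H compact if K and H⁺ are commensurable, i.e. (H⁺ + K)/(H⁺ ∩ K) is finite dimensional, and call a subspace D ⊆ H discrete if there exists a compact subspace K such that D ∩ K = 0 and D + K = H. Then D is discrete if and only if for every compact subspace K, both D ∩ K and H/(D + K) are finite dimensional. -/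
/-!
Say that `A` is finite modulo `B` when the image of `A` in `H ⧸ B` is finite dimensional;
commensurability means finiteness modulo each other, and finiteness modulo is transitive, so all
compact subspaces are commensurable with one another.

If `H = D ⊕ K₀` with `K₀` compact and `K` is compact, then `D ⊓ K` embeds into `H ⧸ K₀` with
image inside the (finite-dimensional) image of `K`, and `H ⧸ (D ⊔ K)` is spanned by the image of
`K₀`, which is finite dimensional modulo `K`.

Conversely, apply the hypothesis to `K = H⁺`: a complement `K₁` of `D ⊓ H⁺` in `H⁺` together with
a complement `W` of `D ⊔ H⁺` in `H` gives a complement `K₁ ⊔ W` of `D` that differs from `H⁺` only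
by the finite-dimensional spaces `D ⊓ H⁺` and `W`.
-/

/-- Two subspaces `K₁, K₂` of a `ℂ`-vector space `H` are *commensurable* if the quotient
`(K₁ + K₂)/(K₁ ∩ K₂)` is finite dimensional. -/
def CommensurableSubspaces (H : Type*) [AddCommGroup H] [Module ℂ H]
    (K₁ K₂ : Submodule ℂ H) : Prop :=
  FiniteDimensional ℂ (↥(K₁ ⊔ K₂) ⧸ (K₁ ⊓ K₂).comap (K₁ ⊔ K₂).subtype)

namespace Submodule

variable {𝕜 V : Type*} [DivisionRing 𝕜] [AddCommGroup V] [Module 𝕜 V]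

def FiniteModulo (A B : Submodule 𝕜 V) : Prop :=
  FiniteDimensional 𝕜 (A.map B.mkQ)

variable {A A' B B' C : Submodule 𝕜 V}

theorem finiteModulo_iff_quotient :
    A.FiniteModulo B ↔ FiniteDimensional 𝕜 (A ⧸ B.comap A.subtype) := by
  have hker : B.comap A.subtype = LinearMap.ker (B.mkQ ∘ₗ A.subtype) := by
    rw [LinearMap.ker_comp, ker_mkQ]
  have hrange : LinearMap.range (B.mkQ ∘ₗ A.subtype) = A.map B.mkQ := by
    rw [LinearMap.range_comp, range_subtype]
  exact (Module.Finite.equiv_iff ((quotEquivOfEq _ _ hker).trans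
    ((B.mkQ ∘ₗ A.subtype).quotKerEquivRange.trans (LinearEquiv.ofEq _ _ hrange)))).symm

theorem finiteModulo_self_inf_iff : A.FiniteModulo (A ⊓ B) ↔ A.FiniteModulo B := by
  rw [finiteModulo_iff_quotient, finiteModulo_iff_quotient, comap_inf, comap_subtype_self,
    top_inf_eq]

theorem FiniteModulo.mono_left (h : A.FiniteModulo B) (hA : A' ≤ A) : A'.FiniteModulo B :=
  have : FiniteDimensional 𝕜 (A.map B.mkQ) := h
  finiteDimensional_of_le (map_mono hA)

theorem FiniteModulo.mono_right (h : A.FiniteModulo B) (hB : B ≤ B') : A.FiniteModulo B' := by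
  have : FiniteDimensional 𝕜 (A.map B.mkQ) := h
  have hmap : A.map B'.mkQ = (A.map B.mkQ).map (factor hB) := by
    rw [← map_comp, factor_comp_mk]
  unfold FiniteModulo
  rw [hmap]
  infer_instance

theorem FiniteModulo.sup_left (h : A.FiniteModulo C) (h' : A'.FiniteModulo C) :
    (A ⊔ A').FiniteModulo C := by
  have : FiniteDimensional 𝕜 (A.map C.mkQ) := h
  have : FiniteDimensional 𝕜 (A'.map C.mkQ) := h'
  unfold FiniteModulo
  rw [map_sup]
  infer_instance

theorem finiteModulo_of_le_sup (F : Submodule 𝕜 V) [FiniteDimensional 𝕜 F] (h : A ≤ B ⊔ F) :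
    A.FiniteModulo B := by
  have hF : (B ⊔ F).map B.mkQ = F.map B.mkQ := by rw [map_sup, mkQ_map_self, bot_sup_eq]
  exact finiteDimensional_of_le ((map_mono h).trans hF.le)

theorem finiteModulo_of_le (h : A ≤ B) : A.FiniteModulo B :=
  finiteModulo_of_le_sup ⊥ (by rwa [sup_bot_eq])

theorem finiteDimensional_of_map_of_inf_ker {W : Type*} [AddCommGroup W] [Module 𝕜 W]
    (f : V →ₗ[𝕜] W) (S : Submodule 𝕜 V) [FiniteDimensional 𝕜 (S.map f)]
    [FiniteDimensional 𝕜 ↥(S ⊓ LinearMap.ker f)] : FiniteDimensional 𝕜 S := by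
  simp only [← fg_iff_finiteDimensional] at *
  exact fg_of_fg_map_of_fg_inf_ker f ‹_› ‹_›

theorem FiniteModulo.trans (hAB : A.FiniteModulo B) (hBC : B.FiniteModulo C) :
    A.FiniteModulo C := by
  let π := factor (le_sup_right : C ≤ B ⊔ C)
  have : FiniteDimensional 𝕜 ((A.map C.mkQ).map π) := by
    rw [← map_comp, factor_comp_mk]
    exact hAB.mono_right le_sup_left
  have hker : LinearMap.ker π = B.map C.mkQ := by
    rw [ker_mapQ, comap_id, map_sup, mkQ_map_self, sup_bot_eq]
  have : FiniteDimensional 𝕜 (B.map C.mkQ) := hBC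
  have : FiniteDimensional 𝕜 ↥(A.map C.mkQ ⊓ LinearMap.ker π) :=
    finiteDimensional_of_le (inf_le_right.trans hker.le)
  exact finiteDimensional_of_map_of_inf_ker π _

theorem FiniteModulo.finiteDimensional_of_disjoint (h : A.FiniteModulo B) (hd : Disjoint A B) :
    FiniteDimensional 𝕜 A := by
  have : FiniteDimensional 𝕜 (A.map B.mkQ) := h
  have : FiniteDimensional 𝕜 ↥(A ⊓ LinearMap.ker B.mkQ) := by
    rw [ker_mkQ, hd.eq_bot]
    infer_instance
  exact finiteDimensional_of_map_of_inf_ker B.mkQ A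

theorem top_finiteModulo_iff :
    (⊤ : Submodule 𝕜 V).FiniteModulo B ↔ FiniteDimensional 𝕜 (V ⧸ B) := by
  rw [FiniteModulo, map_top, range_mkQ]
  exact Module.Finite.equiv_iff topEquiv

theorem exists_isCompl_finiteModulo (D P : Submodule 𝕜 V) [FiniteDimensional 𝕜 ↥(D ⊓ P)]
    [FiniteDimensional 𝕜 (V ⧸ (D ⊔ P))] :
    ∃ K, IsCompl D K ∧ K.FiniteModulo P ∧ P.FiniteModulo K := by
  obtain ⟨K₁, hdisj, hsup⟩ :=
    IsModularLattice.exists_disjoint_and_sup_eq (inf_le_right : D ⊓ P ≤ P)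
  have hK₁P : K₁ ≤ P := hsup ▸ le_sup_right
  have hDK₁ : Disjoint D K₁ := by
    rw [disjoint_iff, ← inf_eq_right.mpr hK₁P, ← inf_assoc, hdisj.eq_bot]
  have hDK₁_sup : D ⊔ K₁ = D ⊔ P :=
    le_antisymm (sup_le_sup_left hK₁P D)
      (sup_le le_sup_left (hsup ▸ sup_le_sup inf_le_left le_rfl))
  obtain ⟨W, hW⟩ := (D ⊔ P).exists_isCompl
  have : FiniteDimensional 𝕜 W := (quotientEquivOfIsCompl _ _ hW).finiteDimensional
  refine ⟨K₁ ⊔ W, ⟨hDK₁.disjoint_sup_right_of_disjoint_sup_left (hDK₁_sup ▸ hW.disjoint), ?_⟩,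
    finiteModulo_of_le_sup W (sup_le_sup_right hK₁P W), finiteModulo_of_le_sup (D ⊓ P) ?_⟩
  · rw [codisjoint_iff, ← sup_assoc, hDK₁_sup, hW.sup_eq_top]
  · calc P = D ⊓ P ⊔ K₁ := hsup.symm
      _ ≤ K₁ ⊔ W ⊔ D ⊓ P := sup_le le_sup_right (le_sup_left.trans le_sup_left)

end Submodule

open Submodule

theorem commensurableSubspaces_iff {H : Type*} [AddCommGroup H] [Module ℂ H]
    (K₁ K₂ : Submodule ℂ H) :
    CommensurableSubspaces H K₁ K₂ ↔ K₁.FiniteModulo K₂ ∧ K₂.FiniteModulo K₁ := by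
  rw [CommensurableSubspaces, ← finiteModulo_iff_quotient]
  refine ⟨fun h ↦ ⟨(h.mono_left le_sup_left).mono_right inf_le_right,
    (h.mono_left le_sup_right).mono_right inf_le_left⟩, fun ⟨h₁, h₂⟩ ↦ ?_⟩
  rw [← finiteModulo_self_inf_iff] at h₁ h₂
  rw [inf_comm] at h₂
  exact h₁.sup_left h₂

/-- Let `H` be a `ℂ`-vector space with a fixed subspace `H⁺`; call a subspace `K` *compact*
if it is commensurable with `H⁺`. A subspace `D` is *discrete* (i.e. there is a compact
subspace `K` with `D ∩ K = 0` and `D + K = H`, so the natural map `D ⊕ K → H` is an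
isomorphism) if and only if for every compact subspace `K`, both `D ∩ K` and `H/(D + K)`
are finite dimensional. -/
theorem discrete_iff_finite_against_all_compacts
    (H : Type*) [AddCommGroup H] [Module ℂ H] (Hplus D : Submodule ℂ H) :
    (∃ K : Submodule ℂ H, CommensurableSubspaces H K Hplus ∧ D ⊓ K = ⊥ ∧ D ⊔ K = ⊤) ↔
    (∀ K : Submodule ℂ H, CommensurableSubspaces H K Hplus →
      FiniteDimensional ℂ ↥(D ⊓ K) ∧ FiniteDimensional ℂ (H ⧸ (D ⊔ K))) := by
  simp only [commensurableSubspaces_iff]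
  constructor
  · rintro ⟨K₀, ⟨hK₀P, hPK₀⟩, hinf, hsup⟩ K ⟨hKP, hPK⟩
    refine ⟨((hKP.trans hPK₀).mono_left inf_le_right).finiteDimensional_of_disjoint ?_, ?_⟩
    · exact (disjoint_iff.mpr hinf).mono_left inf_le_left
    · rw [← top_finiteModulo_iff, ← hsup]
      exact (finiteModulo_of_le le_sup_left).sup_left ((hK₀P.trans hPK).mono_right le_sup_right)
  · intro h
    obtain ⟨hfin, hcofin⟩ := h Hplus ⟨finiteModulo_of_le le_rfl, finiteModulo_of_le le_rfl⟩
    obtain ⟨K, hDK, hKP, hPK⟩ := exists_isCompl_finiteModulo D Hplus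
    exact ⟨K, ⟨hKP, hPK⟩, hDK.inf_eq_bot, hDK.sup_eq_top⟩
end
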